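/- arXiv:2601.12612 — 3 statements merged into one kernel-verified Lean document; each statement's English description precedes it below -/
import Mathlib

section
/- For the Lagrange basis polynomials L_j on the nodes {0, 1, ..., m}, the derivative at zero satisfies L'_j(0) = (-1)^(j-1) * C(m,j) / j for each j with 1 ≤ j ≤ m. -/
/-!
Splitting off the factor `t / j`, which vanishes at `0`, gives
`L_j'(0) = (1 / j) ∏_{k ≠ 0, j} k / (k - j)`. The factors with `k < j` are `k / (k - j)`, whose
product is `(-1)^(j-1)` because `∏ (j - k) = ∏ k` over `1 ≤ k < j`; the factors with `j < k ≤ m`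
multiply to `m! / (j! (m - j)!) = C(m, j)`.
-/

open Finset

-- Only the factor vanishing at the node contributes to the product rule.
theorem deriv_prod_sub_div_at_node {𝕜 ι : Type*} [NontriviallyNormedField 𝕜] [DecidableEq ι]
    {s : Finset ι} {i : ι} (hi : i ∈ s) (x c : ι → 𝕜) :
    deriv (fun t => ∏ k ∈ s, (t - x k) / c k) (x i)
      = (∏ k ∈ s.erase i, (x i - x k) / c k) / c i := by
  have hsplit : (fun t => ∏ k ∈ s, (t - x k) / c k)
      = fun t => (t - x i) / c i * ∏ k ∈ s.erase i, (t - x k) / c k := by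
    funext t
    exact (mul_prod_erase s _ hi).symm
  have hfactor : HasDerivAt (fun t => (t - x i) / c i) (1 / c i) (x i) :=
    ((hasDerivAt_id _).sub_const _).div_const _
  have hrest : DifferentiableAt 𝕜 (fun t => ∏ k ∈ s.erase i, (t - x k) / c k) (x i) := by
    fun_prop
  rw [hsplit, (hfactor.fun_mul hrest.hasDerivAt).deriv]
  simp only [sub_self, zero_div, zero_mul, add_zero]
  ring

theorem prod_Ico_one_div_sub_eq_neg_one_pow (j : ℕ) :
    ∏ k ∈ Ico 1 j, (k : ℝ) / ((k : ℝ) - j) = (-1) ^ (j - 1) := by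
  have hreflect : ∏ k ∈ Ico 1 j, ((j : ℝ) - k) = ∏ k ∈ Ico 1 j, (k : ℝ) := by
    have := prod_Ico_reflect (fun k : ℕ => (k : ℝ)) 1 (Nat.le_succ j)
    rw [Nat.add_sub_cancel_left, Nat.add_sub_cancel] at this
    rw [← this]
    refine prod_congr rfl fun k hk => ?_
    rw [Nat.cast_sub (mem_Ico.1 hk).2.le]
  have hprod_ne : ∏ k ∈ Ico 1 j, (k : ℝ) ≠ 0 :=
    prod_ne_zero_iff.2 fun k hk => Nat.cast_ne_zero.2 (by grind)
  calc ∏ k ∈ Ico 1 j, (k : ℝ) / ((k : ℝ) - j)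
      = ∏ k ∈ Ico 1 j, (-1) * ((k : ℝ) / ((j : ℝ) - k)) :=
        prod_congr rfl fun k _ => by rw [← neg_sub, div_neg, neg_one_mul]
    _ = (-1) ^ (j - 1) := by
        rw [prod_mul_distrib, prod_const, Nat.card_Ico, prod_div_distrib, hreflect,
          div_self hprod_ne, mul_one]

theorem prod_Ioc_div_sub_eq_choose {j m : ℕ} (h : j ≤ m) :
    ∏ k ∈ Ioc j m, (k : ℝ) / ((k : ℝ) - j) = m.choose j := by
  induction m, h using Nat.le_induction with
  | base => simp
  | succ m hjm ih =>
    have hne : (m : ℝ) + 1 - j ≠ 0 := by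
      have : (j : ℝ) ≤ m := by exact_mod_cast hjm
      linarith
    have hpascal : (m.choose j : ℝ) * (m + 1) = (m + 1).choose j * ((m : ℝ) + 1 - j) := by
      have hpascal_nat := congrArg (Nat.cast (R := ℝ)) (Nat.choose_mul_succ_eq m j)
      rwa [Nat.cast_mul, Nat.cast_mul, Nat.cast_sub (by omega), Nat.cast_succ] at hpascal_nat
    rw [prod_Ioc_succ_top hjm, ih, Nat.cast_succ, ← mul_div_assoc, div_eq_iff hne, hpascal]

theorem lagrange_deriv_at_zero_general (m j : ℕ) (hj1 : 1 ≤ j) (hjm : j ≤ m) :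
    deriv (fun t : ℝ => ∏ k ∈ (Finset.range (m + 1)).erase j, (t - (k : ℝ)) / ((j : ℝ) - (k : ℝ))) 0
      = (-1 : ℝ) ^ (j - 1) * (Nat.choose m j : ℝ) / (j : ℝ) := by
  have h0 : 0 ∈ (range (m + 1)).erase j := by
    simp only [mem_erase, mem_range]
    omega
  have hnodes : ((range (m + 1)).erase j).erase 0 = Ico 1 j ∪ Ioc j m := by
    ext k
    simp only [mem_erase, mem_range, mem_union, mem_Ico, mem_Ioc]
    omega
  have hdisj : Disjoint (Ico 1 j) (Ioc j m) :=
    disjoint_left.2 fun k hk hk' => by grind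
  have hflip : ∀ k : ℕ, ((0 : ℕ) - (k : ℝ)) / ((j : ℝ) - k) = k / ((k : ℝ) - j) := fun k => by
    rw [Nat.cast_zero, zero_sub, ← neg_sub, neg_div_neg_eq]
  have hderiv := deriv_prod_sub_div_at_node h0 (fun k : ℕ => (k : ℝ)) (fun k => (j : ℝ) - k)
  simp only [hflip] at hderiv
  rw [← Nat.cast_zero, hderiv, hnodes, prod_union hdisj, prod_Ico_one_div_sub_eq_neg_one_pow,
    prod_Ioc_div_sub_eq_choose hjm, Nat.cast_zero, sub_zero]

/-- Lagrange basis derivative at 0: L'_j(0) = (-1)^(j-1) C(m,j)/j for 1 ≤ j ≤ m. -/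
theorem lagrange_deriv_at_zero (m j : ℕ) (hm : 1 ≤ m) (hj1 : 1 ≤ j) (hjm : j ≤ m) :
    deriv (fun t : ℝ => ∏ k ∈ (Finset.range (m + 1)).erase j, (t - (k : ℝ)) / ((j : ℝ) - (k : ℝ))) 0
      = (-1 : ℝ) ^ (j - 1) * (Nat.choose m j : ℝ) / (j : ℝ) :=
  lagrange_deriv_at_zero_general m j hj1 hjm
end

section
/- Fix real numbers 0 < t_1 < t_2 < ... < t_m. For any continuous function f : ℝ^m → ℝ, there exists a sequence of pairs of positive reals (spectra of 2×2 diagonal SPD matrices) whose normalized log-moment vectors (K(t_1), ..., K(t_m)) converge to a finite limit while the true values K'(0) diverge to -∞; hence sup over such spectra of |f(K(t_1),...,K(t_m)) - K'(0)| = ∞. -/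
open Real Filter

/-- Normalized log-moment function of the two-point spectrum {a, b}. -/
noncomputable def twoPtK (a b t : ℝ) : ℝ :=
  Real.log ((1 / 2) * ((a / ((a + b) / 2)) ^ t + (b / ((a + b) / 2)) ^ t))

/-- K'(0) of the two-point spectrum {a, b}. -/
noncomputable def twoPtK' (a b : ℝ) : ℝ :=
  (1 / 2) * (Real.log (a / ((a + b) / 2)) + Real.log (b / ((a + b) / 2)))

/-!
The spectra `{x, 2 - x}` with `x → 0⁺` are the spectra `{1, κ}` with `κ → ∞`, normalized to
mean `1`. Each moment `(x ^ u + (2 - x) ^ u) / 2` with `u > 0` tends to `2 ^ u / 2`, so every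
`K(u)` converges to `(u - 1) log 2`, whereas `K'(0) = (log x + log (2 - x)) / 2 → -∞`.
A continuous estimator converges along the log-moment vectors, so its error is unbounded.
-/

open Topology

lemma twoPtK_of_add_eq_two {a b : ℝ} (h : a + b = 2) (u : ℝ) :
    twoPtK a b u = Real.log ((1 / 2) * (a ^ u + b ^ u)) := by
  simp [twoPtK, h]

lemma twoPtK'_of_add_eq_two {a b : ℝ} (h : a + b = 2) :
    twoPtK' a b = (1 / 2) * (Real.log a + Real.log b) := by
  simp [twoPtK', h]

lemma tendsto_twoPtK_sub_nhds_zero {u : ℝ} (hu : 0 < u) :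
    Tendsto (fun x => twoPtK x (2 - x) u) (𝓝 0) (𝓝 ((u - 1) * Real.log 2)) := by
  have hlim : (u - 1) * Real.log 2 = Real.log ((1 / 2) * ((0 : ℝ) ^ u + (2 - 0) ^ u)) := by
    rw [zero_rpow hu.ne', sub_zero, zero_add, Real.log_mul (by norm_num) (by positivity),
      Real.log_rpow two_pos, one_div, Real.log_inv]
    ring
  simp only [twoPtK_of_add_eq_two (add_sub_cancel _ _), hlim]
  refine ((continuousAt_const.mul ?_).log ?_).tendsto
  · exact (continuousAt_rpow_const 0 u (Or.inr hu.le)).add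
      ((continuousAt_const.sub continuousAt_id).rpow_const (Or.inl (by norm_num)))
  · simp only [Pi.mul_apply, zero_rpow hu.ne']
    positivity

lemma tendsto_twoPtK'_sub_nhdsGT_zero :
    Tendsto (fun x => twoPtK' x (2 - x)) (𝓝[>] 0) atBot := by
  simp only [twoPtK'_of_add_eq_two (add_sub_cancel _ _)]
  have hlog_two_sub : Tendsto (fun x => Real.log (2 - x)) (𝓝[>] 0) (𝓝 (Real.log 2)) := by
    have := ((continuousAt_const.sub continuousAt_id).log (by norm_num) :
      ContinuousAt (fun x : ℝ => Real.log (2 - x)) 0).tendsto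
    simpa using this.mono_left nhdsWithin_le_nhds
  exact (tendsto_log_nhdsGT_zero.atBot_add hlog_two_sub).const_mul_atBot (by norm_num)

lemma Filter.Tendsto.abs_sub_atBot {α : Type*} {l : Filter α} {f g : α → ℝ} {a : ℝ}
    (hf : Tendsto f l (𝓝 a)) (hg : Tendsto g l atBot) :
    Tendsto (fun i => |f i - g i|) l atTop := by
  have hneg : Tendsto (fun i => -g i) l atTop := tendsto_neg_atBot_atTop.comp hg
  simpa only [sub_eq_add_neg, Function.comp_def] using tendsto_abs_atTop_atTop.comp (hf.add_atTop hneg)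

theorem no_uniform_continuous_estimator_general (m : ℕ)
    (t : Fin m → ℝ) (ht : ∀ j, 0 < t j)
    (f : (Fin m → ℝ) → ℝ) (hf : Continuous f) :
    ∃ s : ℕ → ℝ × ℝ,
      (∀ i, 0 < (s i).1 ∧ 0 < (s i).2) ∧
      (∃ L : Fin m → ℝ,
        Tendsto (fun i => fun j => twoPtK (s i).1 (s i).2 (t j)) atTop (nhds L)) ∧
      Tendsto (fun i => twoPtK' (s i).1 (s i).2) atTop atBot ∧
      Tendsto (fun i =>
          |f (fun j => twoPtK (s i).1 (s i).2 (t j)) - twoPtK' (s i).1 (s i).2|)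
        atTop atTop := by
  set x : ℕ → ℝ := fun i => ((i : ℝ) + 1)⁻¹
  have hx : Tendsto x atTop (𝓝[>] 0) :=
    tendsto_inv_atTop_nhdsGT_zero.comp (tendsto_natCast_atTop_atTop.atTop_add tendsto_const_nhds)
  have hx_le_one (i : ℕ) : x i ≤ 1 := inv_le_one_of_one_le₀ (by simp)
  have hK : Tendsto (fun i j => twoPtK (x i) (2 - x i) (t j)) atTop
      (𝓝 fun j => (t j - 1) * Real.log 2) :=
    tendsto_pi_nhds.2 fun j =>
      (tendsto_twoPtK_sub_nhds_zero (ht j)).comp (hx.mono_right nhdsWithin_le_nhds)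
  have hK' : Tendsto (fun i => twoPtK' (x i) (2 - x i)) atTop atBot :=
    tendsto_twoPtK'_sub_nhdsGT_zero.comp hx
  refine ⟨fun i => (x i, 2 - x i), fun i => ⟨by positivity, by linarith [hx_le_one i]⟩,
    ⟨_, hK⟩, hK', ?_⟩
  exact ((hf.tendsto _).comp hK).abs_sub_atBot hK'

/-- No continuous estimator from finitely many positive log-moments can be
uniformly accurate: there is a sequence of positive two-point spectra whose
log-moment vectors converge, whose K'(0) diverges to -∞, and on which the
estimator's absolute error tends to infinity. -/
theorem no_uniform_continuous_estimator (m : ℕ) (hm : 1 ≤ m)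
    (t : Fin m → ℝ) (ht : ∀ j, 0 < t j) (htmono : StrictMono t)
    (f : (Fin m → ℝ) → ℝ) (hf : Continuous f) :
    ∃ s : ℕ → ℝ × ℝ,
      (∀ i, 0 < (s i).1 ∧ 0 < (s i).2) ∧
      (∃ L : Fin m → ℝ,
        Tendsto (fun i => fun j => twoPtK (s i).1 (s i).2 (t j)) atTop (nhds L)) ∧
      Tendsto (fun i => twoPtK' (s i).1 (s i).2) atTop atBot ∧
      Tendsto (fun i =>
          |f (fun j => twoPtK (s i).1 (s i).2 (t j)) - twoPtK' (s i).1 (s i).2|)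
        atTop atTop :=
  no_uniform_continuous_estimator_general m t ht f hf
end

section
/- Maclaurin's inequality: for positive reals x_1,...,x_n and 1 ≤ k ≤ n, the normalized symmetric means satisfy E_k^(1/k) ≥ E_{k+1}^(1/(k+1)) for k < n; in particular the geometric mean (∏ x_i)^(1/n) = E_n^(1/n) ≤ E_k^(1/k) for every k. -/
/-!
By Rolle's theorem the derivative of `∏ (X - x i)` has `n - 1` real roots, and comparing
coefficients shows that their normalized symmetric means `E_j` agree with those of the `x i` for
`j < n`; in particular these roots are positive. Iterating this reduces
`E_{k+1}^{1/(k+1)} ≤ E_k^{1/k}` to the case of `k + 1` numbers, where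
`E_k = E_{k+1} * (1 / (k + 1)) * ∑ 1 / x i` and the inequality is AM-GM for the `1 / x i`.
Chaining these inequalities bounds every `E_k^{1/k}` below by the geometric mean `E_n^{1/n}`.
-/

open Real Finset

/-- Normalized elementary symmetric mean E_k = e_k(x)/C(n,k). -/
noncomputable def symMean (n : ℕ) (x : Fin n → ℝ) (k : ℕ) : ℝ :=
  (∑ S ∈ (Finset.univ : Finset (Fin n)).powersetCard k, ∏ i ∈ S, x i) / (n.choose k : ℝ)

open Polynomial

theorem Finset.sum_powersetCard_card_sub_one {α M : Type*} [DecidableEq α] [AddCommMonoid M]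
    {s : Finset α} (hs : s.Nonempty) (f : Finset α → M) :
    ∑ T ∈ s.powersetCard (#s - 1), f T = ∑ i ∈ s, f (s.erase i) := by
  have himage : s.powersetCard (#s - 1) = s.image s.erase := by
    ext T
    simp only [mem_powersetCard, mem_image]
    constructor
    · rintro ⟨hTs, hT⟩
      obtain ⟨i, hiT, rfl⟩ := exists_eq_insert_iff.2 ⟨hTs, by have := hs.card_pos; omega⟩
      exact ⟨i, mem_insert_self i T, erase_insert hiT⟩
    · rintro ⟨i, hi, rfl⟩
      exact ⟨erase_subset i s, card_erase_of_mem hi⟩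
  rw [himage, sum_image fun i hi j hj hij => s.erase_injOn hi hj hij]

namespace Multiset

theorem esymm_pos {R : Type*} [CommSemiring R] [PartialOrder R] [IsStrictOrderedRing R]
    {s : Multiset R} (hs : ∀ r ∈ s, 0 < r) {k : ℕ} (hk : k ≤ card s) : 0 < s.esymm k := by
  have hne : powersetCard k s ≠ 0 := by
    rw [Ne, ← card_eq_zero, card_powersetCard]
    exact (Nat.choose_pos hk).ne'
  simpa [esymm] using sum_lt_sum_of_nonempty (f := fun _ => (0 : R)) (g := prod) hne
    fun t ht => prod_pos fun r hr => hs r (mem_of_le (mem_powersetCard.1 ht).1 hr)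

/-- By Vieta, `∏ (X + r)` has positive coefficients, so it cannot vanish at `-r ≥ 0`. -/
theorem pos_of_esymm_pos {R : Type*} [CommRing R] [LinearOrder R] [IsStrictOrderedRing R]
    {s : Multiset R} (hs : ∀ k ≤ card s, 0 < s.esymm k) {r : R} (hr : r ∈ s) : 0 < r := by
  by_contra! hr0
  have hroot : ((s.map fun a => X + C a).prod).eval (-r) = 0 := by
    rw [eval_multiset_prod]
    exact prod_eq_zero (mem_map.2 ⟨_, mem_map.2 ⟨r, hr, rfl⟩, by simp⟩)
  rw [prod_X_add_C_eq_sum_esymm, eval_finsetSum] at hroot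
  refine hroot.not_gt (sum_pos' (fun j hj => ?_) ⟨card s, by simp, by simp [hs]⟩)
  simp only [eval_mul, eval_C, eval_pow, eval_X]
  exact mul_nonneg (hs j (by simpa [Nat.lt_succ_iff] using hj)).le (pow_nonneg (by linarith) _)

theorem card_roots_derivative_prod_X_sub_C (s : Multiset ℝ) :
    card (derivative (s.map fun r => X - C r).prod).roots = card s - 1 := by
  have hrolle := card_roots_le_derivative (s.map fun r => X - C r).prod
  rw [roots_multiset_prod_X_sub_C] at hrolle
  refine le_antisymm ((card_roots' _).trans ?_) (by omega)
  exact (natDegree_derivative_le _).trans (by simp)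

section Field

variable {K : Type*} [Field K]

theorem esymm_roots_derivative_prod_X_sub_C [CharZero K] {s : Multiset K} {n : ℕ} (hs : card s = n + 1)
    (hroots : card (derivative (s.map fun r => X - C r).prod).roots = n) {j : ℕ} (hj : j ≤ n) :
    (derivative (s.map fun r => X - C r).prod).roots.esymm j * (n + 1) =
      s.esymm j * (n + 1 - j : ℕ) := by
  set P := (s.map fun r => X - C r).prod
  have hcoeff : ∀ i ≤ n,
      (derivative P).coeff (n - i) = (-1) ^ i * s.esymm i * (n + 1 - i : ℕ) := by
    intro i hi
    rw [coeff_derivative, prod_X_sub_C_coeff s (by omega), hs,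
      show n + 1 - (n - i + 1) = i by omega, show n + 1 - i = n - i + 1 by omega]
    push_cast
    ring
  have hlead : (derivative P).coeff n = n + 1 := by
    simpa [esymm] using hcoeff 0 (Nat.zero_le n)
  have hdeg : (derivative P).natDegree = n := by
    refine le_antisymm ?_ (le_natDegree_of_ne_zero (by rw [hlead]; exact_mod_cast n.succ_ne_zero))
    exact (natDegree_derivative_le P).trans (by simp [P, hs])
  have hvieta := coeff_eq_esymm_roots_of_card (hroots.trans hdeg.symm) (k := n - j) (by omega)
  rw [hcoeff j hj, leadingCoeff, hdeg, hlead, show n - (n - j) = j by omega] at hvieta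
  have hsign : ((-1 : K) ^ j) ≠ 0 := pow_ne_zero _ (by norm_num)
  apply mul_left_cancel₀ hsign
  linear_combination -hvieta

noncomputable def esymmMean (s : Multiset K) (k : ℕ) : K :=
  s.esymm k / (card s).choose k

theorem esymmMean_roots_derivative_prod_X_sub_C [CharZero K] {s : Multiset K}
    (hroots : card (derivative (s.map fun r => X - C r).prod).roots = card s - 1) {j : ℕ}
    (hj : j < card s) :
    (derivative (s.map fun r => X - C r).prod).roots.esymmMean j = s.esymmMean j := by
  obtain ⟨n, hs⟩ : ∃ n, card s = n + 1 := ⟨card s - 1, by omega⟩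
  rw [hs, Nat.add_sub_cancel] at hroots
  have hesymm := esymm_roots_derivative_prod_X_sub_C hs hroots (j := j) (by omega)
  have hchoose : (n.choose j * (n + 1) : K) = (n + 1).choose j * (n + 1 - j : ℕ) := by
    exact_mod_cast Nat.choose_mul_succ_eq n j
  have hchoose_ne : ∀ m, j ≤ m → (m.choose j : K) ≠ 0 := fun m hm => by
    exact_mod_cast (Nat.choose_pos hm).ne'
  have hnj : ((n + 1 - j : ℕ) : K) ≠ 0 := by exact_mod_cast (show n + 1 - j ≠ 0 by omega)
  rw [esymmMean, esymmMean, hroots, hs,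
    div_eq_div_iff (hchoose_ne n (by omega)) (hchoose_ne (n + 1) (by omega))]
  apply mul_right_cancel₀ hnj
  linear_combination (n.choose j : K) * hesymm - esymm _ j * hchoose

end Field

theorem esymmMean_pos {s : Multiset ℝ} (hs : ∀ r ∈ s, 0 < r) {k : ℕ} (hk : k ≤ card s) :
    0 < s.esymmMean k :=
  div_pos (esymm_pos hs hk) (by exact_mod_cast Nat.choose_pos hk)

theorem exists_pos_esymmMean_eq {s : Multiset ℝ} (hs : ∀ r ∈ s, 0 < r) {n : ℕ}
    (hsn : card s = n + 1) :
    ∃ t : Multiset ℝ, (∀ r ∈ t, 0 < r) ∧ card t = n ∧ ∀ j ≤ n, t.esymmMean j = s.esymmMean j := by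
  have hcard := card_roots_derivative_prod_X_sub_C s
  have heq : ∀ j ≤ n,
      (derivative (s.map fun r => X - C r).prod).roots.esymmMean j = s.esymmMean j :=
    fun j hj => esymmMean_roots_derivative_prod_X_sub_C hcard (by omega)
  rw [hsn, Nat.add_sub_cancel] at hcard
  refine ⟨_, fun r hr => pos_of_esymm_pos (fun k hk => ?_) hr, hcard, heq⟩
  have hmean := esymmMean_pos hs (k := k) (by omega)
  rw [← heq k (by omega), esymmMean] at hmean
  exact (div_pos_iff_of_pos_right (by exact_mod_cast Nat.choose_pos hk)).1 hmean

theorem esymmMean_map_univ_rpow_le {ι : Type*} [Fintype ι] {x : ι → ℝ} (hx : ∀ i, 0 < x i)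
    {k : ℕ} (hk : 1 ≤ k) (hι : Fintype.card ι = k + 1) :
    (univ.val.map x).esymmMean (k + 1) ^ (1 / (k + 1 : ℝ)) ≤
      (univ.val.map x).esymmMean k ^ (1 / (k : ℝ)) := by
  classical
  set P := ∏ i, x i
  have hP : 0 < P := Finset.prod_pos fun i _ => hx i
  have htop : (univ.val.map x).esymmMean (k + 1) = P := by
    rw [esymmMean, card_map, card_val, Finset.esymm_map_val, card_univ, hι, Nat.choose_self,
      ← hι, ← card_univ, Finset.powersetCard_self]
    simp [P]
  have hsub : (univ.val.map x).esymmMean k = P * ∑ i, (1 / (k + 1 : ℝ)) * (x i)⁻¹ := by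
    have hne : (univ : Finset ι).Nonempty :=
      univ_nonempty_iff.2 ⟨(Fintype.equivFin ι).symm ⟨0, by omega⟩⟩
    have hsum := sum_powersetCard_card_sub_one hne fun T => ∏ i ∈ T, x i
    rw [card_univ, hι, Nat.add_sub_cancel] at hsum
    have herase : ∀ i, ∏ j ∈ univ.erase i, x j = P * (x i)⁻¹ := fun i =>
      (eq_mul_inv_iff_mul_eq₀ (hx i).ne').2 (prod_erase_mul _ _ (mem_univ i))
    rw [esymmMean, card_map, card_val, Finset.esymm_map_val, card_univ, hι,
      Nat.choose_succ_self_right, hsum, ← mul_sum]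
    simp only [herase, ← mul_sum]
    push_cast
    ring
  have hamgm := geom_mean_le_arith_mean_weighted univ (fun _ => 1 / (k + 1 : ℝ))
    (fun i => (x i)⁻¹) (fun _ _ => by positivity) (by simp [hι]; field_simp)
    (fun i _ => (inv_pos.2 (hx i)).le)
  rw [finsetProd_rpow _ _ (fun i _ => (inv_pos.2 (hx i)).le), prod_inv_distrib] at hamgm
  have hlow : P ^ (k / (k + 1 : ℝ)) ≤ (univ.val.map x).esymmMean k := by
    calc P ^ (k / (k + 1 : ℝ)) = P * P⁻¹ ^ (1 / (k + 1 : ℝ)) := by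
          rw [inv_rpow hP.le, ← rpow_neg hP.le]
          nth_rw 2 [← rpow_one P]
          rw [← rpow_add hP]
          congr 1
          field_simp
          ring
      _ ≤ _ := hsub ▸ mul_le_mul_of_nonneg_left hamgm hP.le
  calc (univ.val.map x).esymmMean (k + 1) ^ (1 / (k + 1 : ℝ))
      = (P ^ (k / (k + 1 : ℝ))) ^ (1 / (k : ℝ)) := by
        rw [htop, ← rpow_mul hP.le]
        congr 1
        field_simp
    _ ≤ _ := rpow_le_rpow (by positivity) hlow (by positivity)

theorem esymmMean_succ_rpow_le {s : Multiset ℝ} (hs : ∀ r ∈ s, 0 < r) {k : ℕ} (hk : 1 ≤ k)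
    (hks : k < card s) :
    s.esymmMean (k + 1) ^ (1 / (k + 1 : ℝ)) ≤ s.esymmMean k ^ (1 / (k : ℝ)) := by
  obtain ⟨m, hm⟩ := Nat.exists_eq_add_of_lt hks
  induction m generalizing s with
  | zero =>
    simpa only [map_univ_coe] using
      esymmMean_map_univ_rpow_le (x := fun r : s => (r : ℝ)) (fun _ => hs _ coe_mem) hk
        (by rw [card_coe, hm])
  | succ m ih =>
    obtain ⟨t, ht, htm, hts⟩ := exists_pos_esymmMean_eq hs (n := k + m + 1) (by omega)
    rw [← hts k (by omega), ← hts (k + 1) (by omega)]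
    exact ih ht (by omega) (by omega)

end Multiset

theorem symMean_eq_esymmMean (n : ℕ) (x : Fin n → ℝ) (k : ℕ) :
    symMean n x k = (univ.val.map x).esymmMean k := by
  rw [symMean, Multiset.esymmMean, Finset.esymm_map_val, Multiset.card_map, card_val, card_univ,
    Fintype.card_fin]

theorem maclaurin_inequality_general (n : ℕ) (x : Fin n → ℝ) (hx : ∀ i, 0 < x i) :
    (∀ k, 1 ≤ k → k < n →
      (symMean n x (k + 1)) ^ ((1 : ℝ) / ((k : ℝ) + 1)) ≤ (symMean n x k) ^ ((1 : ℝ) / (k : ℝ))) ∧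
    (∀ k, 1 ≤ k → k ≤ n →
      (symMean n x n) ^ ((1 : ℝ) / (n : ℝ)) ≤ (symMean n x k) ^ ((1 : ℝ) / (k : ℝ))) := by
  have hstep : ∀ k, 1 ≤ k → k < n →
      symMean n x (k + 1) ^ ((1 : ℝ) / ((k : ℝ) + 1)) ≤ symMean n x k ^ ((1 : ℝ) / (k : ℝ)) :=
    fun k hk hkn => by
      simpa only [symMean_eq_esymmMean] using
        Multiset.esymmMean_succ_rpow_le (by simpa using hx) hk (by simpa using hkn)
  have hanti : AntitoneOn (fun k : ℕ => symMean n x k ^ ((1 : ℝ) / k)) (Set.Icc 1 n) :=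
    antitoneOn_of_add_one_le Set.ordConnected_Icc fun k _ hk hk1 => by
      simpa using hstep k hk.1 hk1.2
  exact ⟨hstep, fun k hk hkn => hanti ⟨hk, hkn⟩ ⟨hk.trans hkn, le_rfl⟩ hkn⟩

/-- Maclaurin's inequality: E_k^(1/k) ≥ E_{k+1}^(1/(k+1)) for 1 ≤ k < n, and in
particular the geometric mean E_n^(1/n) ≤ E_k^(1/k) for every 1 ≤ k ≤ n. -/
theorem maclaurin_inequality (n : ℕ) (hn : 1 ≤ n) (x : Fin n → ℝ) (hx : ∀ i, 0 < x i) :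
    (∀ k, 1 ≤ k → k < n →
      (symMean n x (k + 1)) ^ ((1 : ℝ) / ((k : ℝ) + 1)) ≤ (symMean n x k) ^ ((1 : ℝ) / (k : ℝ))) ∧
    (∀ k, 1 ≤ k → k ≤ n →
      (symMean n x n) ^ ((1 : ℝ) / (n : ℝ)) ≤ (symMean n x k) ^ ((1 : ℝ) / (k : ℝ))) :=
  maclaurin_inequality_general n x hx
end
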